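/- arXiv:1611.09882 — 2 statements merged into one kernel-verified Lean document; each statement's English description precedes it below -/
import Mathlib

section
/- Let ω ∈ ℝ with |ω| > m > 0, let κ(ω) = √(ω² - m²) > 0, and let ε > 0 with ε sufficiently small relative to |ω| - m (e.g. 0 < ε ≤ (|ω|-m)/n for a suitable fixed n ∈ ℕ). Then Im √((ω+iε)² - m²) ≤ 2εω/κ(ω) when ω > m, where the square root is the branch with positive imaginary part on the upper half-plane. -/
/-!
Write `z = (ω + iε)² - m² = A + iB` with `A = ω² - ε² - m²` and `B = 2εω`. For `A > 0` the imaginary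
part of the principal square root is `√((|z| - A)/2)`, and rationalising
`|z| - A = B² / (|z| + A) ≤ B² / (2A)` gives `Im √z ≤ B / (2√A)`. Once `ε ≤ (ω - m)/2` we have
`4ε² ≤ 3(ω² - m²)`, i.e. `ω² - m² ≤ 4A`, so `B / (2√A) ≤ B / √(ω² - m²)`.
-/

namespace Complex

theorem norm_sub_re_le_im_sq_div {z : ℂ} (hre : 0 < z.re) :
    ‖z‖ - z.re ≤ z.im ^ 2 / (2 * z.re) := by
  have hnorm_sq : ‖z‖ ^ 2 = z.re ^ 2 + z.im ^ 2 := by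
    rw [Complex.sq_norm, normSq_apply]; ring
  have hre_le : z.re ≤ ‖z‖ := re_le_norm z
  rw [le_div_iff₀ (by positivity)]
  nlinarith

theorem im_cpow_half_le {z : ℂ} (hre : 0 < z.re) (him : 0 ≤ z.im) :
    (z ^ (1 / 2 : ℂ)).im ≤ z.im / (2 * √z.re) := by
  rw [one_div, cpow_inv_two_im_eq_sqrt him, Real.sqrt_le_left (by positivity), div_pow, mul_pow,
    Real.sq_sqrt hre.le]
  have := norm_sub_re_le_im_sq_div hre
  rw [le_div_iff₀ (by positivity)] at this ⊢
  linarith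

end Complex

/-- For `ω > m > 0` and `ε > 0` small relative to `ω - m`,
`Im √((ω+iε)² - m²) ≤ 2εω/√(ω²-m²)` (principal branch, which has positive
imaginary part on the upper half-plane). -/
theorem stmt7 (m ω : ℝ) (hm : 0 < m) (hω : m < ω) :
    ∃ n : ℕ, 0 < n ∧ ∀ ε : ℝ, 0 < ε → ε ≤ (ω - m) / n →
      (((((ω : ℂ) + (ε : ℂ) * Complex.I) ^ 2 - (m : ℂ) ^ 2) ^ (1 / 2 : ℂ)).im
        ≤ 2 * ε * ω / Real.sqrt (ω ^ 2 - m ^ 2)) := by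
  refine ⟨2, two_pos, fun ε hε hεsmall => ?_⟩
  set z : ℂ := ((ω : ℂ) + (ε : ℂ) * Complex.I) ^ 2 - (m : ℂ) ^ 2
  have hz_re : z.re = ω ^ 2 - ε ^ 2 - m ^ 2 := by simp [z, sq]
  have hz_im : z.im = 2 * ε * ω := by simp [z, sq]; ring
  have hω_pos : 0 < ω := hm.trans hω
  have htwo_ε : 2 * ε ≤ ω - m := by push_cast at hεsmall; linarith
  have hκ_le : ω ^ 2 - m ^ 2 ≤ 4 * z.re := by rw [hz_re]; nlinarith
  have hre : 0 < z.re := by nlinarith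
  have hκ_pos : 0 < √(ω ^ 2 - m ^ 2) := Real.sqrt_pos.2 (by nlinarith)
  have hκ_le_two_sqrt : √(ω ^ 2 - m ^ 2) ≤ 2 * √z.re := by
    rw [Real.sqrt_le_left (by positivity), mul_pow, Real.sq_sqrt hre.le]
    linarith
  calc (z ^ (1 / 2 : ℂ)).im ≤ z.im / (2 * √z.re) :=
        Complex.im_cpow_half_le hre (by rw [hz_im]; positivity)
    _ ≤ 2 * ε * ω / √(ω ^ 2 - m ^ 2) := by
        rw [hz_im]
        exact div_le_div_of_nonneg_left (by positivity) hκ_pos hκ_le_two_sqrt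
end

section
/- Let ζ̃ be a tempered distribution on ℝ that is locally L² on ℝ \ [-m,m], and let ζ(t+s_j) → η(t) uniformly on compacts for some sequence s_j → ∞, with ζ, η bounded continuous functions (so η̃ is the distributional limit of e^{-iωs_j}ζ̃(ω) on test functions supported away from [-m,m]). Then supp η̃ ⊆ [-m,m]. -/
open MeasureTheory Real Filter Topology

noncomputable section

/-- The Fourier transform (convention `φ̂(ω) = ∫ e^{iωt} φ(t) dt`) of a Schwartz function. -/
def myFT (φ : SchwartzMap ℝ ℂ) (ω : ℝ) : ℂ :=
  ∫ t : ℝ, Complex.exp (Complex.I * ω * t) * φ t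

/-- The support of the distributional Fourier transform of a (bounded) function. -/
def fourierSupp (f : ℝ → ℂ) : Set ℝ :=
  {ω : ℝ | ∀ ε > (0 : ℝ), ∃ φ : SchwartzMap ℝ ℂ,
    tsupport (fun x => φ x) ⊆ Metric.ball ω ε ∧ (∫ t : ℝ, f t * myFT φ t) ≠ 0}

/-!
Pair `η` with `myFT φ`, where `φ` is a test function supported in a small closed ball `K`
away from `[-m, m]`. By dominated convergence this pairing is the limit of the pairings of
the translates `ζ (· + s j)`. Translating `ζ` by `s` is the same as modulating `φ` by
`e^{-i s ω}`, which keeps the support in `K`; so by the local representation of `ζ̃` on `K`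
the `j`-th pairing is the Fourier integral at frequency `-s j` of `1_K h φ`, which tends to `0`
by the Riemann–Lebesgue lemma.
-/

open FourierTransform

theorem Real.integral_cexp_mul_eq_fourier (g : ℝ → ℂ) (a : ℝ) :
    ∫ ω : ℝ, Complex.exp (Complex.I * a * ω) * g ω = 𝓕 g (-(2 * π)⁻¹ * a) := by
  rw [Real.fourier_real_eq_integral_exp_smul]
  congr 1 with v
  rw [smul_eq_mul]
  congr 2
  push_cast
  field_simp

-- No integrability hypothesis: for non-integrable `g` every integral here is the junk value `0`.
theorem Real.tendsto_integral_cexp_mul_cocompact (g : ℝ → ℂ) :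
    Tendsto (fun a : ℝ => ∫ ω : ℝ, Complex.exp (Complex.I * a * ω) * g ω) (cocompact ℝ)
      (𝓝 0) := by
  simp_rw [Real.integral_cexp_mul_eq_fourier]
  exact (Real.zero_at_infty_fourier g).comp
    (Homeomorph.mulLeft₀ _ (by simp [pi_ne_zero])).toCocompactMap.cocompact_tendsto'

theorem iteratedDeriv_cexp_const_mul_ofReal (n : ℕ) (c : ℂ) :
    iteratedDeriv n (fun x : ℝ => Complex.exp (c * x))
      = fun x : ℝ => c ^ n * Complex.exp (c * x) := by
  induction n with
  | zero => simp
  | succ n ih =>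
    ext x
    have hlin : HasDerivAt (fun x : ℝ => c * x) c x := by
      simpa using (Complex.ofRealCLM.hasDerivAt (x := x)).const_mul c
    rw [iteratedDeriv_succ, ih, ((hlin.cexp).const_mul (c ^ n)).deriv]
    ring

theorem hasTemperateGrowth_cexp_I_mul (a : ℝ) :
    Function.HasTemperateGrowth (fun x : ℝ => Complex.exp (Complex.I * a * x)) := by
  refine ⟨(contDiff_const.mul Complex.ofRealCLM.contDiff).cexp,
    fun n => ⟨0, ‖Complex.I * a‖ ^ n, fun x => ?_⟩⟩
  rw [norm_iteratedFDeriv_eq_norm_iteratedDeriv, iteratedDeriv_cexp_const_mul_ofReal]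
  simp [Complex.norm_exp]

theorem myFT_eq_fourier (φ : SchwartzMap ℝ ℂ) (ω : ℝ) : myFT φ ω = 𝓕 φ (-(2 * π)⁻¹ * ω) :=
  Real.integral_cexp_mul_eq_fourier φ ω

theorem integrable_myFT (φ : SchwartzMap ℝ ℂ) : Integrable (myFT φ) := by
  simp_rw [funext (myFT_eq_fourier φ)]
  exact (𝓕 φ).integrable.comp_mul_left' (by simp [pi_ne_zero])

def modulate (a : ℝ) (φ : SchwartzMap ℝ ℂ) : SchwartzMap ℝ ℂ :=
  SchwartzMap.smulLeftCLM ℂ (fun x : ℝ => Complex.exp (Complex.I * a * x)) φ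

theorem modulate_apply (a : ℝ) (φ : SchwartzMap ℝ ℂ) (x : ℝ) :
    modulate a φ x = Complex.exp (Complex.I * a * x) * φ x :=
  SchwartzMap.smulLeftCLM_apply_apply (hasTemperateGrowth_cexp_I_mul a) φ x

theorem tsupport_modulate_subset (a : ℝ) (φ : SchwartzMap ℝ ℂ) :
    tsupport (fun x => modulate a φ x) ⊆ tsupport (fun x => φ x) := by
  simpa only [modulate_apply] using tsupport_mul_subset_right

theorem myFT_modulate (a : ℝ) (φ : SchwartzMap ℝ ℂ) (ω : ℝ) :
    myFT (modulate a φ) ω = myFT φ (ω + a) := by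
  simp only [myFT, modulate_apply, ← mul_assoc, ← Complex.exp_add]
  congr 1 with t
  push_cast
  ring_nf

theorem integral_comp_add_mul_myFT (ζ : ℝ → ℂ) (φ : SchwartzMap ℝ ℂ) (a : ℝ) :
    ∫ t, ζ (t + a) * myFT φ t = ∫ t, ζ t * myFT (modulate (-a) φ) t := by
  rw [← integral_add_right_eq_self (fun t => ζ t * myFT _ t) a]
  simp_rw [myFT_modulate, add_neg_cancel_right]

theorem tendsto_integral_mul_of_tendsto_of_bounded {F : ℕ → ℝ → ℂ} {f g : ℝ → ℂ} {M : ℝ}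
    (hF : ∀ j, Continuous (F j)) (hFM : ∀ j t, ‖F j t‖ ≤ M)
    (hFf : ∀ t, Tendsto (fun j => F j t) atTop (𝓝 (f t))) (hg : Integrable g) :
    Tendsto (fun j => ∫ t, F j t * g t) atTop (𝓝 (∫ t, f t * g t)) := by
  refine tendsto_integral_of_dominated_convergence (fun t => M * ‖g t‖)
    (fun j => (hF j).aestronglyMeasurable.mul hg.aestronglyMeasurable) (hg.norm.const_mul M)
    (fun j => .of_forall fun t => ?_) (.of_forall fun t => (hFf t).mul tendsto_const_nhds)
  rw [norm_mul]
  exact mul_le_mul_of_nonneg_right (hFM j t) (norm_nonneg _)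

theorem integral_mul_myFT_eq_zero_of_tendsto_comp_add {ζ η h : ℝ → ℂ} {M : ℝ} {K : Set ℝ}
    {s : ℕ → ℝ} (hζc : Continuous ζ) (hζM : ∀ t, ‖ζ t‖ ≤ M) (hs : Tendsto s atTop atTop)
    (hζη : ∀ t, Tendsto (fun j => ζ (t + s j)) atTop (𝓝 (η t))) (hK : MeasurableSet K)
    (hrep : ∀ ψ : SchwartzMap ℝ ℂ, tsupport (fun x => ψ x) ⊆ K →
      ∫ t, ζ t * myFT ψ t = ∫ ω in K, h ω * ψ ω)
    {φ : SchwartzMap ℝ ℂ} (hφ : tsupport (fun x => φ x) ⊆ K) :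
    ∫ t, η t * myFT φ t = 0 := by
  have hlim := tendsto_integral_mul_of_tendsto_of_bounded
    (fun j => hζc.comp (continuous_add_const (s j))) (fun j t => hζM _) hζη (integrable_myFT φ)
  have hmodulate : ∀ j, ∫ t, ζ (t + s j) * myFT φ t
      = ∫ ω : ℝ, Complex.exp (Complex.I * (-s j : ℝ) * ω) * K.indicator (fun ω => h ω * φ ω) ω := by
    intro j
    rw [integral_comp_add_mul_myFT, hrep _ ((tsupport_modulate_subset _ φ).trans hφ),
      ← integral_indicator hK]
    congr 1 with ω
    by_cases hω : ω ∈ K <;> simp [hω, modulate_apply, mul_left_comm]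
  have hRL := (Real.tendsto_integral_cexp_mul_cocompact
      (K.indicator fun ω => h ω * φ ω)).comp
    ((tendsto_neg_atTop_atBot.comp hs).mono_right atBot_le_cocompact)
  exact tendsto_nhds_unique hlim (hRL.congr fun j => (hmodulate j).symm)

theorem stmt18_general (m : ℝ) (ζ η : ℝ → ℂ)
    (hζc : Continuous ζ) (hζb : ∃ M : ℝ, ∀ t, ‖ζ t‖ ≤ M)
    (hloc : ∀ K : Set ℝ, IsCompact K → K ∩ Set.Icc (-m) m = ∅ →
      ∃ h : ℝ → ℂ, MemLp h 2 (volume.restrict K) ∧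
        ∀ φ : SchwartzMap ℝ ℂ, tsupport (fun x => φ x) ⊆ K →
          (∫ t : ℝ, ζ t * myFT φ t) = ∫ ω in K, h ω * φ ω)
    (s : ℕ → ℝ) (hs : Tendsto s atTop atTop)
    (hconv : ∀ T > (0 : ℝ),
      TendstoUniformlyOn (fun j t => ζ (t + s j)) η atTop (Set.Icc (-T) T)) :
    fourierSupp η ⊆ Set.Icc (-m) m := by
  intro ω₀ hω₀
  by_contra hω₀m
  obtain ⟨M, hM⟩ := hζb
  obtain ⟨δ, hδ, hball⟩ :=
    Metric.nhds_basis_closedBall.mem_iff.1 (isClosed_Icc.isOpen_compl.mem_nhds hω₀m)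
  obtain ⟨h, -, hrep⟩ := hloc _ (isCompact_closedBall ω₀ δ)
    (Set.disjoint_iff_inter_eq_empty.1 (Set.subset_compl_iff_disjoint_right.1 hball))
  have hpointwise (t : ℝ) : Tendsto (fun j => ζ (t + s j)) atTop (𝓝 (η t)) :=
    (hconv (|t| + 1) (by positivity)).tendsto_at (abs_le.1 (le_add_of_nonneg_right zero_le_one))
  obtain ⟨φ, hφ, hφη⟩ := hω₀ δ hδ
  exact hφη (integral_mul_myFT_eq_zero_of_tendsto_comp_add hζc hM hs hpointwise
    measurableSet_closedBall hrep (hφ.trans Metric.ball_subset_closedBall))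

/-- If `ζ̃` is locally `L²` outside `[-m,m]` and `ζ(·+s_j) → η` uniformly on compacts
with `s_j → ∞`, then `supp η̃ ⊆ [-m,m]`. -/
theorem stmt18 (m : ℝ) (hm : 0 < m) (ζ η : ℝ → ℂ)
    (hζc : Continuous ζ) (hζb : ∃ M : ℝ, ∀ t, ‖ζ t‖ ≤ M)
    (hηc : Continuous η) (hηb : ∃ M : ℝ, ∀ t, ‖η t‖ ≤ M)
    (hloc : ∀ K : Set ℝ, IsCompact K → K ∩ Set.Icc (-m) m = ∅ →
      ∃ h : ℝ → ℂ, MemLp h 2 (volume.restrict K) ∧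
        ∀ φ : SchwartzMap ℝ ℂ, tsupport (fun x => φ x) ⊆ K →
          (∫ t : ℝ, ζ t * myFT φ t) = ∫ ω in K, h ω * φ ω)
    (s : ℕ → ℝ) (hs : Tendsto s atTop atTop)
    (hconv : ∀ T > (0 : ℝ),
      TendstoUniformlyOn (fun j t => ζ (t + s j)) η atTop (Set.Icc (-T) T)) :
    fourierSupp η ⊆ Set.Icc (-m) m :=
  stmt18_general m ζ η hζc hζb hloc s hs hconv
end
end
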